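/- If φ : S → ℝ is a bounded measurable function with ∫_S φ dπ = 0, where π is the unique invariant probability measure of P, then the series Σ_{n=0}^∞ (Pⁿφ)(x) converges absolutely for every x ∈ S, and moreover sup_{x∈S} Σ_{n=0}^∞ |(Pⁿφ)(x)| < ∞. -/

import Mathlib

/-!
The minorization `p(x, ·) ≥ δ` on `U₀` makes any two rows of the kernel overlap in mass at least
`δ μ(U₀)`, so `∫ |p(x₁, ·) - p(x₂, ·)| dμ ≤ 2θ` with `θ = 1 - δ μ(U₀)`, and `P` contracts the
oscillation of a bounded function by the factor `θ`. Invariance of `π` gives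
`∫ Pⁿφ dπ = ∫ φ dπ = 0`, and a function with zero `π`-mean is bounded by its oscillation. Hence
`|Pⁿφ| ≤ 2 ‖φ‖ θⁿ` uniformly in `x`, and the series is dominated by a geometric one.
-/

open MeasureTheory ProbabilityTheory

section Oscillation

lemma exists_abs_sub_le_half {ι : Type*} {ψ : ι → ℝ} {D : ℝ} (h : ∀ y y', ψ y - ψ y' ≤ D) :
    ∃ c, ∀ y, |ψ y - c| ≤ D / 2 := by
  refine ⟨(⨆ y, ψ y) - D / 2, fun y => ?_⟩
  have : Nonempty ι := ⟨y⟩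
  have hbdd : BddAbove (Set.range ψ) :=
    ⟨ψ y + D, Set.forall_mem_range.2 fun y' => by linarith [h y' y]⟩
  have hle : ψ y ≤ ⨆ y', ψ y' := le_ciSup hbdd y
  have hge : (⨆ y', ψ y') ≤ ψ y + D := ciSup_le fun y' => by linarith [h y' y]
  exact abs_le.2 ⟨by linarith, by linarith⟩

variable {α : Type*} [MeasurableSpace α] {μ : Measure α}

lemma abs_le_of_abs_sub_le_of_integral_eq_zero [IsProbabilityMeasure μ] {g : α → ℝ}
    (hg : Integrable g μ) (hg0 : ∫ y, g y ∂μ = 0) {D : ℝ} (hD : ∀ x y, |g x - g y| ≤ D) (x : α) :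
    |g x| ≤ D := by
  have hx : g x = ∫ y, (g x - g y) ∂μ := by
    rw [integral_sub (integrable_const _) hg, hg0]
    simp
  rw [hx]
  simpa using norm_integral_le_of_norm_le_const (μ := μ) (f := fun y => g x - g y)
    (ae_of_all _ (hD x))

end Oscillation

section Overlap

variable {α : Type*} [MeasurableSpace α] {μ : Measure α}

lemma abs_integral_mul_sub_integral_mul_le {f g ψ : α → ℝ} (hf : Integrable f μ)
    (hg : Integrable g μ) (hfg : ∫ y, f y ∂μ = ∫ y, g y ∂μ) (hψ : AEStronglyMeasurable ψ μ)
    {c r : ℝ} (hr : ∀ y, |ψ y - c| ≤ r) :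
    |∫ y, f y * ψ y ∂μ - ∫ y, g y * ψ y ∂μ| ≤ r * ∫ y, |f y - g y| ∂μ := by
  have hψ_bdd : ∀ᵐ y ∂μ, ‖ψ y‖ ≤ |c| + r := ae_of_all _ fun y => by
    have := abs_sub_abs_le_abs_sub (ψ y) c
    rw [Real.norm_eq_abs]; linarith [hr y]
  have hfψ : Integrable (fun y => f y * ψ y) μ := hf.mul_bdd hψ hψ_bdd
  have hgψ : Integrable (fun y => g y * ψ y) μ := hg.mul_bdd hψ hψ_bdd
  -- the constant `c` can be subtracted from `ψ` because `f` and `g` have the same mass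
  have hcentre : ∫ y, f y * ψ y ∂μ - ∫ y, g y * ψ y ∂μ = ∫ y, (f y - g y) * (ψ y - c) ∂μ := by
    have : (fun y => (f y - g y) * (ψ y - c))
        = fun y => (f y * ψ y - g y * ψ y) - (f y - g y) * c := by
      funext y; ring
    rw [this, integral_sub (f := fun y => f y * ψ y - g y * ψ y) (g := fun y => (f y - g y) * c)
      (hfψ.sub hgψ) ((hf.sub hg).mul_const c), integral_sub hfψ hgψ,
      integral_mul_const, integral_sub hf hg, hfg, sub_self, zero_mul, sub_zero]
  rw [hcentre, ← integral_const_mul]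
  refine norm_integral_le_of_norm_le (f := fun y => (f y - g y) * (ψ y - c))
    (g := fun y => r * |f y - g y|)
    ((hf.sub hg).abs.const_mul r) (ae_of_all _ fun y => ?_)
  rw [Real.norm_eq_abs, abs_mul, mul_comm r]
  exact mul_le_mul_of_nonneg_left (hr y) (abs_nonneg _)

lemma integral_abs_sub_le_of_le_on [IsFiniteMeasure μ] {f g : α → ℝ} (hf : Integrable f μ)
    (hg : Integrable g μ) (hf1 : ∫ y, f y ∂μ = 1) (hg1 : ∫ y, g y ∂μ = 1)
    (hf0 : ∀ y, 0 ≤ f y) (hg0 : ∀ y, 0 ≤ g y) {U : Set α} (hU : MeasurableSet U) {δ : ℝ}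
    (hfU : ∀ y ∈ U, δ ≤ f y) (hgU : ∀ y ∈ U, δ ≤ g y) :
    ∫ y, |f y - g y| ∂μ ≤ 2 * (1 - δ * μ.real U) := by
  have hind : Integrable (U.indicator fun _ => δ) μ := (integrable_const δ).indicator hU
  -- `|f - g| = f + g - 2 min f g`, and `min f g ≥ δ` on `U`
  have hpt : ∀ y, |f y - g y| ≤ f y + g y - 2 * U.indicator (fun _ => δ) y := fun y => by
    by_cases hy : y ∈ U
    · rw [Set.indicator_of_mem hy]
      exact abs_sub_le_iff.2 ⟨by linarith [hgU y hy], by linarith [hfU y hy]⟩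
    · rw [Set.indicator_of_notMem hy]
      exact abs_sub_le_iff.2 ⟨by linarith [hg0 y], by linarith [hf0 y]⟩
  calc ∫ y, |f y - g y| ∂μ ≤ ∫ y, f y + g y - 2 * U.indicator (fun _ => δ) y ∂μ :=
        integral_mono (hf.sub hg).abs ((hf.add hg).sub (hind.const_mul 2)) hpt
    _ = 2 * (1 - δ * μ.real U) := by
        rw [integral_sub (f := fun y => f y + g y) (hf.add hg) (hind.const_mul 2),
          integral_add hf hg, integral_const_mul,
          integral_indicator_const δ hU, hf1, hg1, smul_eq_mul]
        ring

end Overlap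

section MarkovOperator

variable {α : Type*} [MeasurableSpace α] {μ : Measure α} {p : α × α → ℝ}

noncomputable def markovOp (μ : Measure α) (p : α × α → ℝ) (ψ : α → ℝ) (x : α) : ℝ :=
  ∫ y, p (x, y) * ψ y ∂μ

lemma integrable_density (hp_int : ∀ x, ∫ y, p (x, y) ∂μ = 1) (x : α) :
    Integrable (fun y => p (x, y)) μ :=
  Integrable.of_integral_ne_zero (by rw [hp_int]; exact one_ne_zero)

lemma measurable_markovOp [SFinite μ] (hp : Measurable p) {ψ : α → ℝ} (hψ : Measurable ψ) :
    Measurable (markovOp μ p ψ) :=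
  (hp.mul (hψ.comp measurable_snd)).stronglyMeasurable.integral_prod_right'.measurable

lemma abs_markovOp_le (hp_nonneg : ∀ z, 0 ≤ p z) (hp_int : ∀ x, ∫ y, p (x, y) ∂μ = 1)
    {ψ : α → ℝ} {M : ℝ} (hM : ∀ y, |ψ y| ≤ M) (x : α) : |markovOp μ p ψ x| ≤ M := by
  have h := norm_integral_le_of_norm_le (f := fun y => p (x, y) * ψ y)
    ((integrable_density hp_int x).mul_const M)
    (ae_of_all μ fun y => by
      rw [Real.norm_eq_abs, abs_mul, abs_of_nonneg (hp_nonneg _)]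
      exact mul_le_mul_of_nonneg_left (hM y) (hp_nonneg _))
  rwa [integral_mul_const, hp_int, one_mul] at h

lemma abs_markovOp_sub_le [IsFiniteMeasure μ] (hp_nonneg : ∀ z, 0 ≤ p z)
    (hp_int : ∀ x, ∫ y, p (x, y) ∂μ = 1) {U : Set α} (hU : MeasurableSet U) {δ : ℝ}
    (hp_low : ∀ x, ∀ y ∈ U, δ ≤ p (x, y)) {ψ : α → ℝ} (hψ : Measurable ψ) {c r : ℝ}
    (hr : ∀ y, |ψ y - c| ≤ r) (x₁ x₂ : α) :
    |markovOp μ p ψ x₁ - markovOp μ p ψ x₂| ≤ 2 * (1 - δ * μ.real U) * r := by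
  have hr0 : 0 ≤ r := (abs_nonneg _).trans (hr x₁)
  calc |markovOp μ p ψ x₁ - markovOp μ p ψ x₂|
      ≤ r * ∫ y, |p (x₁, y) - p (x₂, y)| ∂μ :=
        abs_integral_mul_sub_integral_mul_le (integrable_density hp_int x₁)
          (integrable_density hp_int x₂) (by rw [hp_int, hp_int]) hψ.aestronglyMeasurable hr
    _ ≤ r * (2 * (1 - δ * μ.real U)) := by
        gcongr
        exact integral_abs_sub_le_of_le_on (integrable_density hp_int x₁)
          (integrable_density hp_int x₂) (hp_int x₁) (hp_int x₂) (fun y => hp_nonneg _)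
          (fun y => hp_nonneg _) hU (hp_low x₁) (hp_low x₂)
    _ = 2 * (1 - δ * μ.real U) * r := mul_comm _ _

end MarkovOperator

section Invariance

variable {α : Type*} [MeasurableSpace α] {μ : Measure α} [SFinite μ] {p : α × α → ℝ}

noncomputable def densityKernel (μ : Measure α) [SFinite μ] (p : α × α → ℝ) : Kernel α α :=
  Kernel.withDensity (Kernel.const α μ) fun x y => ENNReal.ofReal (p (x, y))

lemma densityKernel_apply (hp : Measurable p) (x : α) :
    densityKernel μ p x = μ.withDensity fun y => ENNReal.ofReal (p (x, y)) := by
  rw [densityKernel, Kernel.withDensity_apply _ hp.ennreal_ofReal, Kernel.const_apply]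

lemma integral_densityKernel (hp : Measurable p) (hp_nonneg : ∀ z, 0 ≤ p z) (ψ : α → ℝ)
    (x : α) : ∫ y, ψ y ∂densityKernel μ p x = markovOp μ p ψ x := by
  rw [densityKernel_apply hp, integral_withDensity_eq_integral_toReal_smul
    (f := fun y => ENNReal.ofReal (p (x, y))) (hp.comp measurable_prodMk_left).ennreal_ofReal (ae_of_all _ fun _ => ENNReal.ofReal_lt_top)]
  simp only [ENNReal.toReal_ofReal (hp_nonneg _), smul_eq_mul, markovOp]

lemma comp_densityKernel_eq (hp : Measurable p) (hp_nonneg : ∀ z, 0 ≤ p z)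
    (hp_int : ∀ x, ∫ y, p (x, y) ∂μ = 1) {π : Measure α} [IsFiniteMeasure π]
    (hπ_inv : ∀ E, MeasurableSet E → (π E).toReal = ∫ x, (∫ y in E, p (x, y) ∂μ) ∂π) :
    densityKernel μ p ∘ₘ π = π := by
  ext E hE
  have hmass : ∀ x, densityKernel μ p x E = ENNReal.ofReal (∫ y in E, p (x, y) ∂μ) := fun x => by
    rw [densityKernel_apply hp, withDensity_apply _ hE, ofReal_integral_eq_lintegral_ofReal
      (integrable_density hp_int x).integrableOn (ae_of_all _ fun _ => hp_nonneg _)]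
  have hmass_int : Integrable (fun x => ∫ y in E, p (x, y) ∂μ) π := by
    refine Integrable.of_bound ?_ 1 (ae_of_all _ fun x => ?_)
    · exact (hp.stronglyMeasurable.integral_prod_right' (ν := μ.restrict E)).aestronglyMeasurable
    · rw [Real.norm_eq_abs, abs_of_nonneg (integral_nonneg fun _ => hp_nonneg _), ← hp_int x]
      exact setIntegral_le_integral (integrable_density hp_int x) (ae_of_all _ fun _ => hp_nonneg _)
  rw [Measure.bind_apply hE (Kernel.aemeasurable _), lintegral_congr fun x => hmass x,
    ← ofReal_integral_eq_lintegral_ofReal hmass_int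
      (ae_of_all _ fun _ => integral_nonneg fun _ => hp_nonneg _),
    ← hπ_inv E hE, ENNReal.ofReal_toReal (measure_ne_top π E)]

lemma integral_markovOp (hp : Measurable p) (hp_nonneg : ∀ z, 0 ≤ p z)
    (hp_int : ∀ x, ∫ y, p (x, y) ∂μ = 1) {π : Measure α} [IsFiniteMeasure π]
    (hπ_inv : ∀ E, MeasurableSet E → (π E).toReal = ∫ x, (∫ y in E, p (x, y) ∂μ) ∂π)
    {ψ : α → ℝ} (hψ : Integrable ψ π) :
    ∫ x, markovOp μ p ψ x ∂π = ∫ y, ψ y ∂π := by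
  have hcomp := comp_densityKernel_eq hp hp_nonneg hp_int hπ_inv
  rw [← hcomp, Measure.comp_eq_comp_const_apply] at hψ
  conv_rhs => rw [← hcomp, Measure.comp_eq_comp_const_apply, Kernel.integral_comp hψ]
  simp only [Kernel.const_apply, integral_densityKernel hp hp_nonneg]

end Invariance

section Iteration

variable {α : Type*} [MeasurableSpace α] {μ : Measure α} {p : α × α → ℝ} {φ : α → ℝ}

lemma measurable_iterate_markovOp [SFinite μ] (hp : Measurable p) (hφ : Measurable φ) (n : ℕ) :
    Measurable ((markovOp μ p)^[n] φ) := by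
  induction n with
  | zero => exact hφ
  | succ n ih => rw [Function.iterate_succ_apply']; exact measurable_markovOp hp ih

lemma abs_iterate_markovOp_le (hp_nonneg : ∀ z, 0 ≤ p z) (hp_int : ∀ x, ∫ y, p (x, y) ∂μ = 1)
    {M : ℝ} (hM : ∀ y, |φ y| ≤ M) (n : ℕ) (x : α) : |(markovOp μ p)^[n] φ x| ≤ M := by
  induction n generalizing x with
  | zero => exact hM x
  | succ n ih => rw [Function.iterate_succ_apply']; exact abs_markovOp_le hp_nonneg hp_int ih x

lemma integrable_iterate_markovOp [SFinite μ] (hp : Measurable p) (hp_nonneg : ∀ z, 0 ≤ p z)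
    (hp_int : ∀ x, ∫ y, p (x, y) ∂μ = 1) (hφ : Measurable φ) {M : ℝ} (hM : ∀ y, |φ y| ≤ M)
    {π : Measure α} [IsFiniteMeasure π] (n : ℕ) : Integrable ((markovOp μ p)^[n] φ) π :=
  .of_bound (measurable_iterate_markovOp hp hφ n).aestronglyMeasurable M
    (ae_of_all _ (abs_iterate_markovOp_le hp_nonneg hp_int hM n))

lemma integral_iterate_markovOp [SFinite μ] (hp : Measurable p) (hp_nonneg : ∀ z, 0 ≤ p z)
    (hp_int : ∀ x, ∫ y, p (x, y) ∂μ = 1) {π : Measure α} [IsFiniteMeasure π]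
    (hπ_inv : ∀ E, MeasurableSet E → (π E).toReal = ∫ x, (∫ y in E, p (x, y) ∂μ) ∂π)
    (hφ : Measurable φ) {M : ℝ} (hM : ∀ y, |φ y| ≤ M) (n : ℕ) :
    ∫ x, (markovOp μ p)^[n] φ x ∂π = ∫ x, φ x ∂π := by
  induction n with
  | zero => rfl
  | succ n ih =>
    rw [Function.iterate_succ_apply', integral_markovOp hp hp_nonneg hp_int hπ_inv
      (integrable_iterate_markovOp hp hp_nonneg hp_int hφ hM n), ih]

lemma abs_iterate_markovOp_sub_le [IsFiniteMeasure μ] (hp : Measurable p)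
    (hp_nonneg : ∀ z, 0 ≤ p z) (hp_int : ∀ x, ∫ y, p (x, y) ∂μ = 1) {U : Set α} (hU : MeasurableSet U)
    {δ : ℝ} (hp_low : ∀ x, ∀ y ∈ U, δ ≤ p (x, y)) (hφ : Measurable φ) {M : ℝ}
    (hM : ∀ y, |φ y| ≤ M) (n : ℕ) (x₁ x₂ : α) :
    |(markovOp μ p)^[n] φ x₁ - (markovOp μ p)^[n] φ x₂| ≤ 2 * M * (1 - δ * μ.real U) ^ n := by
  induction n generalizing x₁ x₂ with
  | zero =>
    simpa [two_mul] using (abs_sub _ _).trans (add_le_add (hM x₁) (hM x₂))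
  | succ n ih =>
    obtain ⟨c, hc⟩ := exists_abs_sub_le_half fun y y' => (le_abs_self _).trans (ih y y')
    rw [Function.iterate_succ_apply']
    calc _ ≤ 2 * (1 - δ * μ.real U) * (2 * M * (1 - δ * μ.real U) ^ n / 2) :=
          abs_markovOp_sub_le hp_nonneg hp_int hU hp_low (measurable_iterate_markovOp hp hφ n)
            hc x₁ x₂
      _ = 2 * M * (1 - δ * μ.real U) ^ (n + 1) := by ring

end Iteration

lemma summable_abs_of_abs_le_geometric {a : ℕ → ℝ} {C θ : ℝ} (hθ0 : 0 ≤ θ) (hθ1 : θ < 1)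
    (ha : ∀ n, |a n| ≤ C * θ ^ n) : Summable fun n => |a n| :=
  .of_norm_bounded ((summable_geometric_of_lt_one hθ0 hθ1).mul_left C)
    fun n => (abs_abs (a n)).trans_le (ha n)

lemma tsum_abs_le_of_abs_le_geometric {a : ℕ → ℝ} {C θ : ℝ} (hθ0 : 0 ≤ θ) (hθ1 : θ < 1)
    (ha : ∀ n, |a n| ≤ C * θ ^ n) : ∑' n, |a n| ≤ C / (1 - θ) := by
  calc ∑' n, |a n| ≤ ∑' n, C * θ ^ n :=
        (summable_abs_of_abs_le_geometric hθ0 hθ1 ha).tsum_le_tsum ha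
          ((summable_geometric_of_lt_one hθ0 hθ1).mul_left C)
    _ = C / (1 - θ) := by rw [tsum_mul_left, tsum_geometric_of_lt_one hθ0 hθ1, div_eq_mul_inv]

theorem stmt_2_general
    {S : Type*} [MetricSpace S] [CompactSpace S]
    [MeasurableSpace S] [BorelSpace S]
    (μ : Measure S) [IsProbabilityMeasure μ]
    (p : S × S → ℝ) (hp_cont : Continuous p) (hp_nonneg : ∀ z, 0 ≤ p z)
    (hp_int : ∀ x : S, ∫ y, p (x, y) ∂μ = 1)
    (P : (S → ℝ) → (S → ℝ))
    (hP : ∀ (φ : S → ℝ) (x : S), P φ x = ∫ y, p (x, y) * φ y ∂μ)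
    (U₀ : Set S) (hU₀ : MeasurableSet U₀)
    (δ : ℝ)
    (hδμ_pos : 0 < δ * (μ U₀).toReal) (hδμ_lt : δ * (μ U₀).toReal < 1)
    (hp_low : ∀ x : S, ∀ y ∈ U₀, δ ≤ p (x, y))
    (π : Measure S) (hπ_prob : IsProbabilityMeasure π)
    (hπ_inv : ∀ E : Set S, MeasurableSet E →
      (π E).toReal = ∫ x, (∫ y in E, p (x, y) ∂μ) ∂π)
    (φ : S → ℝ) (hφ_meas : Measurable φ) (hφ_bdd : ∃ M : ℝ, ∀ x, |φ x| ≤ M)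
    (hφ_mean : ∫ y, φ y ∂π = 0) :
    (∀ x : S, Summable (fun n : ℕ => |(P^[n] φ) x|)) ∧
    ∃ B : ℝ, ∀ x : S, ∑' n : ℕ, |(P^[n] φ) x| ≤ B := by
  obtain ⟨M, hM⟩ := hφ_bdd
  obtain rfl : P = markovOp μ p := funext fun ψ => funext (hP ψ)
  have hp : Measurable p := hp_cont.measurable
  rw [← measureReal_def] at hδμ_pos hδμ_lt
  have hθ0 : 0 ≤ 1 - δ * μ.real U₀ := by linarith
  have hθ1 : 1 - δ * μ.real U₀ < 1 := by linarith
  have hgeom : ∀ x n, |(markovOp μ p)^[n] φ x| ≤ 2 * M * (1 - δ * μ.real U₀) ^ n := fun x n =>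
    abs_le_of_abs_sub_le_of_integral_eq_zero
      (integrable_iterate_markovOp hp hp_nonneg hp_int hφ_meas hM n)
      (by rw [integral_iterate_markovOp hp hp_nonneg hp_int hπ_inv hφ_meas hM, hφ_mean])
      (abs_iterate_markovOp_sub_le hp hp_nonneg hp_int hU₀ hp_low hφ_meas hM n) x
  exact ⟨fun x => summable_abs_of_abs_le_geometric hθ0 hθ1 (hgeom x),
    _, fun x => tsum_abs_le_of_abs_le_geometric hθ0 hθ1 (hgeom x)⟩

/-- if `φ` is bounded measurable with zero mean against the (unique)
invariant probability measure `π` of the Markov operator `P`, then `Σₙ (Pⁿφ)(x)` converges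
absolutely for every `x`, uniformly in `x`. -/
theorem stmt_2
    {S : Type*} [MetricSpace S] [CompactSpace S] [Nonempty S]
    [MeasurableSpace S] [BorelSpace S]
    (μ : Measure S) [IsProbabilityMeasure μ]
    (p : S × S → ℝ) (hp_cont : Continuous p) (hp_nonneg : ∀ z, 0 ≤ p z)
    (hp_int : ∀ x : S, ∫ y, p (x, y) ∂μ = 1)
    (P : (S → ℝ) → (S → ℝ))
    (hP : ∀ (φ : S → ℝ) (x : S), P φ x = ∫ y, p (x, y) * φ y ∂μ)
    (U₀ : Set S) (hU₀ : MeasurableSet U₀)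
    (δ : ℝ) (hδ : 0 < δ)
    (hδμ_pos : 0 < δ * (μ U₀).toReal) (hδμ_lt : δ * (μ U₀).toReal < 1)
    (hp_low : ∀ x : S, ∀ y ∈ U₀, δ ≤ p (x, y))
    (π : Measure S) (hπ_prob : IsProbabilityMeasure π)
    (hπ_inv : ∀ E : Set S, MeasurableSet E →
      (π E).toReal = ∫ x, (∫ y in E, p (x, y) ∂μ) ∂π)
    (φ : S → ℝ) (hφ_meas : Measurable φ) (hφ_bdd : ∃ M : ℝ, ∀ x, |φ x| ≤ M)
    (hφ_mean : ∫ y, φ y ∂π = 0) :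
    (∀ x : S, Summable (fun n : ℕ => |(P^[n] φ) x|)) ∧
    ∃ B : ℝ, ∀ x : S, ∑' n : ℕ, |(P^[n] φ) x| ≤ B :=
  stmt_2_general μ p hp_cont hp_nonneg hp_int P hP U₀ hU₀ δ hδμ_pos hδμ_lt hp_low π hπ_prob hπ_inv φ
    hφ_meas hφ_bdd hφ_mean
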